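/- Let m ≥ 3 and let n be a positive multiple of m−1. Label the m candidates a_1, …, a_{m−1}, o and partition the n voters into m−1 sets S_1, …, S_{m−1}, each of size n/(m−1). Let σ be an ordinal profile in which, for each ℓ, every voter in S_ℓ ranks a_ℓ first and o second. Let v̂ be the unit-sum valuation profile consistent with σ in which every voter has value 1/2 for each of her two most-preferred candidates and 0 for all others. Then for every candidate w: (a) if w = o, there exists a unit-sum valuation profile v consistent with σ such that SW(o|v) = 0 and SW(a_1|v) > 0; and (b) if w = a_ℓ for some ℓ, then under the true profile v = v̂ (i.e., when the prediction is accurate) SW(o|v̂) = (m−1)·SW(a_ℓ|v̂). (This shows that, given the full valuation profile as prediction, no mechanism simultaneously achieves consistency strictly smaller than m−1 and bounded robustness.) -/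
import Mathlib


open Finset

/-- Social welfare of candidate `x` under valuation profile `v`. -/
noncomputable def SW {n m : ℕ} (v : Fin n → Fin m → ℝ) (x : Fin m) : ℝ := ∑ i, v i x

/-- `v` is a valuation profile with nonnegative values summing to `1` for each voter. -/
def UnitSum {n m : ℕ} (v : Fin n → Fin m → ℝ) : Prop :=
  (∀ i x, 0 ≤ v i x) ∧ ∀ i, ∑ x, v i x = 1

/-- `σ i p` is the candidate ranked at position `p` by voter `i` (position `0` is the top);
`v` is consistent with `σ` if each voter's values are non-increasing along her ranking. -/
def Consistent {n m : ℕ} (σ : Fin n → (Fin m ≃ Fin m)) (v : Fin n → Fin m → ℝ) : Prop :=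
  ∀ i, ∀ p q : Fin m, p ≤ q → v i (σ i q) ≤ v i (σ i p)

/-- Given the full valuation profile as prediction, no mechanism simultaneously achieves
consistency strictly smaller than `m - 1` and bounded robustness: the underlying instance. -/
theorem stmt1 (m n : ℕ) (hm : 3 ≤ m) (hn : 0 < n) (hdvd : (m - 1) ∣ n)
    (o : Fin m) (a : Fin (m - 1) → Fin m) (ha : Function.Injective a)
    (hao : ∀ ℓ, a ℓ ≠ o)
    (S : Fin n → Fin (m - 1))
    (hS : ∀ ℓ, (Finset.univ.filter (fun i => S i = ℓ)).card = n / (m - 1))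
    (σ : Fin n → (Fin m ≃ Fin m))
    (hσ1 : ∀ i, σ i ⟨0, by omega⟩ = a (S i))
    (hσ2 : ∀ i, σ i ⟨1, by omega⟩ = o)
    (vhat : Fin n → Fin m → ℝ) (hvhatU : UnitSum vhat) (hvhatC : Consistent σ vhat)
    (hvhat : ∀ i, vhat i (σ i ⟨0, by omega⟩) = 1 / 2 ∧ vhat i (σ i ⟨1, by omega⟩) = 1 / 2 ∧
      ∀ p : Fin m, 2 ≤ (p : ℕ) → vhat i (σ i p) = 0) :
    ∀ w : Fin m,
      (w = o → ∃ v : Fin n → Fin m → ℝ, UnitSum v ∧ Consistent σ v ∧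
        SW v o = 0 ∧ 0 < SW v (a ⟨0, by omega⟩)) ∧
      (∀ ℓ : Fin (m - 1), w = a ℓ →
        SW vhat o = ((m : ℝ) - 1) * SW vhat (a ℓ)) := by
  intro w
  constructor
  · intro _
    refine ⟨fun i x => if x = a (S i) then 1 else 0, ⟨?_, ?_⟩, ?_, ?_, ?_⟩
    · intro i x; dsimp only; split_ifs <;> norm_num
    · intro i; simp
    · intro i p q hpq
      dsimp only
      by_cases hq : σ i q = a (S i)
      · have h0 : σ i q = σ i ⟨0, by omega⟩ := by rw [hσ1]; exact hq
        have hq0 : q = ⟨0, by omega⟩ := (σ i).injective h0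
        have hp0 : p = ⟨0, by omega⟩ := by
          rw [hq0] at hpq
          exact Fin.ext (Nat.le_zero.mp (Fin.le_def.mp hpq))
        rw [hq0, hp0]
      · simp only [hq, if_false]
        split_ifs <;> norm_num
    · unfold SW
      apply Finset.sum_eq_zero
      intro i _
      exact if_neg (fun h => hao (S i) h.symm)
    · unfold SW
      have hrw : ∀ i : Fin n,
          (if a ⟨0, by omega⟩ = a (S i) then (1:ℝ) else 0)
          = if S i = ⟨0, by omega⟩ then (1:ℝ) else 0 := by
        intro i
        congr 1
        simp only [eq_iff_iff]
        constructor
        · intro h; exact (ha h).symm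
        · intro h; rw [h]
      simp only [hrw]
      rw [Finset.sum_boole, hS ⟨0, by omega⟩]
      have : 0 < n / (m - 1) := Nat.div_pos (Nat.le_of_dvd hn hdvd) (by omega)
      positivity
  · intro ℓ _
    have hSWo : SW vhat o = (n : ℝ) * (1 / 2) := by
      unfold SW
      have : ∀ i : Fin n, vhat i o = 1 / 2 := by
        intro i; rw [← hσ2 i]; exact (hvhat i).2.1
      simp [this]
    have hterm : ∀ i : Fin n, vhat i (a ℓ) = if S i = ℓ then (1:ℝ)/2 else 0 := by
      intro i
      by_cases h : S i = ℓ
      · rw [if_pos h]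
        have := (hvhat i).1
        rw [hσ1 i, h] at this
        exact this
      · rw [if_neg h]
        set p := (σ i).symm (a ℓ) with hp
        have hap : σ i p = a ℓ := (σ i).apply_symm_apply _
        have hp0 : p ≠ ⟨0, by omega⟩ := by
          intro hc
          rw [hc, hσ1 i] at hap
          exact h (ha hap.symm).symm
        have hp1 : p ≠ ⟨1, by omega⟩ := by
          intro hc
          rw [hc, hσ2 i] at hap
          exact hao ℓ hap.symm
        have h2 : 2 ≤ (p : ℕ) := by
          by_contra hh
          push_neg at hh
          interval_cases hv : (p : ℕ)
          · exact hp0 (Fin.ext hv)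
          · exact hp1 (Fin.ext hv)
        have := (hvhat i).2.2 p h2
        rw [hap] at this
        exact this
    have hSWa : SW vhat (a ℓ) = ((n / (m-1) : ℕ) : ℝ) * (1 / 2) := by
      unfold SW
      simp only [hterm]
      rw [← Finset.sum_filter, Finset.sum_const, hS ℓ, nsmul_eq_mul]
    rw [hSWo, hSWa]
    have hcast : ((m : ℝ) - 1) * ((n / (m-1) : ℕ) : ℝ) = (n : ℝ) := by
      have h1 : ((m : ℝ) - 1) = ((m - 1 : ℕ) : ℝ) := by
        have : (1:ℕ) ≤ m := by omega
        push_cast [Nat.cast_sub this]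
        ring
      rw [h1, ← Nat.cast_mul, Nat.mul_div_cancel' hdvd]
    rw [← mul_assoc, hcast]
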